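/- arXiv:0805.3751 — 3 statements merged into one kernel-verified Lean document; each statement's English description precedes it below -/
import Mathlib

section
/- If a non-degenerate spherical triangle (geodesic triangle on the unit sphere, with angles not in πℤ, allowing cone-type abstract triangles) has interior angles A, B, C, then cos²A + cos²B + cos²C + 2 cos A cos B cos C < 1. -/
/-!
Write `a = ⟪Q, R⟫`, `b = ⟪P, R⟫`, `c = ⟪P, Q⟫`, let `p, q, r` be the cosines of the angles at
`P, Q, R`, and let `G a b c = 1 - a² - b² - c² + 2 a b c` be the Gram determinant of `P, Q, R`.
The claim is `G (-p) (-q) (-r) > 0` (the Gram determinant of the polar triangle). Projecting to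
the tangent planes gives `p √(1 - b²) √(1 - c²) = a - b c` and its cyclic versions, whence

  `G (-p) (-q) (-r) (1 - a²) (1 - b²) (1 - c²) = (G a b c)²`,  `G a b c = (1 - b²) (1 - c²) sin² A`.

If no two vertices are equal or antipodal, `G a b c > 0` and the claim follows. If, say,
`Q = ±P`, the tangent projections at `P` and `Q` vanish, so `A = B = π / 2` and the claim
reduces to `cos² C < 1`.
-/

open Real InnerProductGeometry
open scoped RealInnerProductSpace

noncomputable def sphAngle {V : Type*} [NormedAddCommGroup V] [InnerProductSpace ℝ V]
    (P Q R : V) : ℝ :=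
  angle (Q - ⟪P, Q⟫ • P) (R - ⟪P, R⟫ • P)

/-- The Gram determinant of three unit vectors with pairwise inner products `a`, `b`, `c`. -/
def gramDet (a b c : ℝ) : ℝ := 1 - a ^ 2 - b ^ 2 - c ^ 2 + 2 * a * b * c

theorem cos_sq_lt_one_of_sin_ne_zero {x : ℝ} (h : sin x ≠ 0) : cos x ^ 2 < 1 := by
  linarith [sin_sq_add_cos_sq x, sq_pos_of_ne_zero h]

section Algebra

variable {a b c p q r x y z : ℝ}

theorem gramDet_eq_mul_one_sub_sq (hy : y ^ 2 = 1 - b ^ 2) (hz : z ^ 2 = 1 - c ^ 2)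
    (hp : p * (z * y) = a - c * b) :
    gramDet a b c = (1 - p ^ 2) * ((1 - b ^ 2) * (1 - c ^ 2)) := by
  rw [gramDet]
  linear_combination (p * (z * y) + (a - c * b)) * hp - p ^ 2 * z ^ 2 * hy
    - p ^ 2 * (1 - b ^ 2) * hz

theorem gramDet_neg_mul_eq_gramDet_sq (hx : x ^ 2 = 1 - a ^ 2) (hy : y ^ 2 = 1 - b ^ 2)
    (hz : z ^ 2 = 1 - c ^ 2) (hp : p * (z * y) = a - c * b) (hq : q * (x * z) = b - a * c)
    (hr : r * (y * x) = c - b * a) :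
    gramDet (-p) (-q) (-r) * ((1 - a ^ 2) * (1 - b ^ 2) * (1 - c ^ 2)) = gramDet a b c ^ 2 := by
  have eP : p ^ 2 * (y ^ 2 * z ^ 2) = (a - c * b) ^ 2 := by
    linear_combination (p * (z * y) + (a - c * b)) * hp
  have eQ : q ^ 2 * (x ^ 2 * z ^ 2) = (b - a * c) ^ 2 := by
    linear_combination (q * (x * z) + (b - a * c)) * hq
  have eR : r ^ 2 * (x ^ 2 * y ^ 2) = (c - b * a) ^ 2 := by
    linear_combination (r * (y * x) + (c - b * a)) * hr
  have epqr : p * q * r * (x ^ 2 * y ^ 2 * z ^ 2) = (a - c * b) * (b - a * c) * (c - b * a) := by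
    linear_combination (q * (x * z)) * (r * (y * x)) * hp + (a - c * b) * (r * (y * x)) * hq
      + (a - c * b) * (b - a * c) * hr
  simp only [hx, hy, hz] at eP eQ eR epqr
  simp only [gramDet]
  linear_combination (-(1 - a ^ 2)) * eP - (1 - b ^ 2) * eQ - (1 - c ^ 2) * eR - 2 * epqr

theorem gramDet_neg_pos (hx : x ^ 2 = 1 - a ^ 2) (hy : y ^ 2 = 1 - b ^ 2)
    (hz : z ^ 2 = 1 - c ^ 2) (hp : p * (z * y) = a - c * b) (hq : q * (x * z) = b - a * c)
    (hr : r * (y * x) = c - b * a) (hp1 : p ^ 2 < 1) (hb : b ^ 2 < 1) (hc : c ^ 2 < 1) :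
    0 < gramDet (-p) (-q) (-r) := by
  have hG : 0 < gramDet a b c := by
    rw [gramDet_eq_mul_one_sub_sq hy hz hp]
    exact mul_pos (sub_pos.mpr hp1) (mul_pos (sub_pos.mpr hb) (sub_pos.mpr hc))
  have hD : 0 ≤ (1 - a ^ 2) * (1 - b ^ 2) * (1 - c ^ 2) := by
    rw [← hx, ← hy, ← hz]
    positivity
  refine pos_of_mul_pos_left ?_ hD
  rw [gramDet_neg_mul_eq_gramDet_sq hx hy hz hp hq hr]
  exact pow_pos hG 2

end Algebra

section Sphere

variable {V : Type*} [NormedAddCommGroup V] [InnerProductSpace ℝ V] {P Q R : V}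

theorem inner_sq_le_one (hP : ‖P‖ = 1) (hQ : ‖Q‖ = 1) : ⟪P, Q⟫ ^ 2 ≤ 1 := by
  have := abs_real_inner_le_norm P Q
  rw [hP, hQ, mul_one] at this
  exact sq_le_one_iff_abs_le_one _ |>.mpr this

theorem norm_sub_inner_smul_sq (hP : ‖P‖ = 1) (hQ : ‖Q‖ = 1) :
    ‖Q - ⟪P, Q⟫ • P‖ ^ 2 = 1 - ⟪P, Q⟫ ^ 2 := by
  rw [norm_sub_sq_real, real_inner_smul_right, norm_smul, hP, hQ, real_inner_comm]
  simp only [norm_eq_abs, mul_one, sq_abs, one_pow]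
  ring

theorem norm_sub_inner_smul (hP : ‖P‖ = 1) (hQ : ‖Q‖ = 1) :
    ‖Q - ⟪P, Q⟫ • P‖ = √(1 - ⟪P, Q⟫ ^ 2) := by
  rw [← norm_sub_inner_smul_sq hP hQ, sqrt_sq (norm_nonneg _)]

theorem sub_inner_smul_eq_zero (hP : ‖P‖ = 1) (hQ : ‖Q‖ = 1) (h : ⟪P, Q⟫ ^ 2 = 1) :
    Q - ⟪P, Q⟫ • P = 0 := by
  rw [← norm_eq_zero, ← sq_eq_zero_iff, norm_sub_inner_smul_sq hP hQ, h, sub_self]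

theorem inner_sub_inner_smul (hP : ‖P‖ = 1) :
    ⟪Q - ⟪P, Q⟫ • P, R - ⟪P, R⟫ • P⟫ = ⟪Q, R⟫ - ⟪P, Q⟫ * ⟪P, R⟫ := by
  simp only [inner_sub_left, inner_sub_right, real_inner_smul_left, real_inner_smul_right,
    real_inner_self_eq_norm_sq, hP, real_inner_comm P]
  ring

theorem cos_sphAngle_mul (hP : ‖P‖ = 1) (hQ : ‖Q‖ = 1) (hR : ‖R‖ = 1) :
    cos (sphAngle P Q R) * (√(1 - ⟪P, Q⟫ ^ 2) * √(1 - ⟪P, R⟫ ^ 2))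
      = ⟪Q, R⟫ - ⟪P, Q⟫ * ⟪P, R⟫ := by
  rw [← norm_sub_inner_smul hP hQ, ← norm_sub_inner_smul hP hR, sphAngle,
    cos_angle_mul_norm_mul_norm, inner_sub_inner_smul hP]

theorem cos_sphAngle_eq_zero_of_inner_sq_eq_one (hP : ‖P‖ = 1) (hQ : ‖Q‖ = 1)
    (h : ⟪P, Q⟫ ^ 2 = 1) (R : V) :
    cos (sphAngle P Q R) = 0 ∧ cos (sphAngle Q R P) = 0 := by
  have h' : ⟪Q, P⟫ ^ 2 = 1 := by rwa [real_inner_comm]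
  rw [sphAngle, sphAngle, sub_inner_smul_eq_zero hP hQ h, sub_inner_smul_eq_zero hQ hP h',
    angle_zero_left, angle_zero_right, cos_pi_div_two]
  exact ⟨rfl, rfl⟩

theorem gramDet_neg_cos_sphAngle_pos (hP : ‖P‖ = 1) (hQ : ‖Q‖ = 1) (hR : ‖R‖ = 1)
    (hb : ⟪P, R⟫ ^ 2 ≠ 1) (hc : ⟪P, Q⟫ ^ 2 ≠ 1) (hA : sin (sphAngle P Q R) ≠ 0) :
    0 < gramDet (-cos (sphAngle P Q R)) (-cos (sphAngle Q R P)) (-cos (sphAngle R P Q)) := by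
  have hp := cos_sphAngle_mul hP hQ hR
  have hq := cos_sphAngle_mul hQ hR hP
  have hr := cos_sphAngle_mul hR hP hQ
  rw [real_inner_comm P Q, real_inner_comm P R] at hq
  rw [real_inner_comm P R, real_inner_comm Q R] at hr
  have hsq {S T : V} (hS : ‖S‖ = 1) (hT : ‖T‖ = 1) :
      √(1 - ⟪S, T⟫ ^ 2) ^ 2 = 1 - ⟪S, T⟫ ^ 2 :=
    sq_sqrt (sub_nonneg.mpr (inner_sq_le_one hS hT))
  exact gramDet_neg_pos (hsq hQ hR) (hsq hP hR) (hsq hP hQ) hp hq hr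
    (cos_sq_lt_one_of_sin_ne_zero hA) (lt_of_le_of_ne (inner_sq_le_one hP hR) hb)
    (lt_of_le_of_ne (inner_sq_le_one hP hQ) hc)

end Sphere

theorem stmt_8 (P Q R : EuclideanSpace ℝ (Fin 3))
    (hP : ‖P‖ = 1) (hQ : ‖Q‖ = 1) (hR : ‖R‖ = 1)
    (A B C : ℝ)
    (hA : A = InnerProductGeometry.angle
      (Q - (inner ℝ P Q : ℝ) • P) (R - (inner ℝ P R : ℝ) • P))
    (hB : B = InnerProductGeometry.angle
      (R - (inner ℝ Q R : ℝ) • Q) (P - (inner ℝ Q P : ℝ) • Q))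
    (hC : C = InnerProductGeometry.angle
      (P - (inner ℝ R P : ℝ) • R) (Q - (inner ℝ R Q : ℝ) • R))
    (hAn : ∀ k : ℤ, A ≠ k * π)
    (hBn : ∀ k : ℤ, B ≠ k * π)
    (hCn : ∀ k : ℤ, C ≠ k * π) :
    Real.cos A ^ 2 + Real.cos B ^ 2 + Real.cos C ^ 2
      + 2 * Real.cos A * Real.cos B * Real.cos C < 1 := by
  have hsA : sin A ≠ 0 := sin_ne_zero_iff.mpr fun k => (hAn k).symm
  have hsB : sin B ≠ 0 := sin_ne_zero_iff.mpr fun k => (hBn k).symm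
  have hsC : sin C ≠ 0 := sin_ne_zero_iff.mpr fun k => (hCn k).symm
  suffices 0 < gramDet (-cos A) (-cos B) (-cos C) by rw [gramDet] at this; linarith
  change A = sphAngle P Q R at hA
  change B = sphAngle Q R P at hB
  change C = sphAngle R P Q at hC
  subst hA hB hC
  by_cases hc : ⟪P, Q⟫ ^ 2 = 1
  · obtain ⟨hA0, hB0⟩ := cos_sphAngle_eq_zero_of_inner_sq_eq_one hP hQ hc R
    rw [hA0, hB0, gramDet]
    linarith [cos_sq_lt_one_of_sin_ne_zero hsC]
  by_cases hb : ⟪P, R⟫ ^ 2 = 1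
  · obtain ⟨hC0, hA0⟩ :=
      cos_sphAngle_eq_zero_of_inner_sq_eq_one hR hP (by rwa [real_inner_comm]) Q
    rw [hA0, hC0, gramDet]
    linarith [cos_sq_lt_one_of_sin_ne_zero hsB]
  exact gramDet_neg_cos_sphAngle_pos hP hQ hR hb hc hsA
end

section
/- For integers n ≥ 3 and m ≥ 1, the residue at z = 1 of the meromorphic 1-form dz/(z^n − 1)^{2(m+1)} is nonzero. Hence ∮_τ Q_{n,m}/dg_{n,m} ≠ 0 where g_{n,m}(z) = z^{n(m+1)−1}, Q_{n,m} = z^{n(m+1)−2}/(z^n−1)^{2(m+1)} dz², and τ is a small loop around z = 1. -/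
open Complex Metric Finset Filter Topology

/-!
Write `I(l, b) = ∮_{|z-1|=δ} z^b (z^n-1)^(-l)` for `δ` so small that `0` and the `n`-th roots of
unity other than `1` lie outside the closed disc. Since `(z^n-1)/(z-1) = 1 + z + ⋯ + z^(n-1)` equals
`n` at `z = 1`, Cauchy's formula gives `I(1, b) = 2πi/n`. The exact form `d(z^a (z^n-1)^(-l))`
integrates to zero around the circle, so `a · I(l, a-1) = l n · I(l+1, a+n-1)`. Taking
`a = b - n + 1`, which is nonzero when `b ≤ 0` and `n ≥ 2`, induction on `l` gives `I(l, b) ≠ 0`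
for all `l ≥ 1` and `b ≤ 0`; the residue in question is `I(2(m+1), 0) / 2πi`.
-/

section PowSubOne

variable {n : ℕ}

lemma hasDerivAt_zpow_mul_pow_sub_one_zpow (a k : ℤ) {z : ℂ} (hz : z ≠ 0)
    (hw : z ^ n - 1 ≠ 0) :
    HasDerivAt (fun z : ℂ => z ^ a * (z ^ n - 1) ^ k)
      (a * (z ^ (a - 1) * (z ^ n - 1) ^ k) +
        k * n * (z ^ (a + n - 1) * (z ^ n - 1) ^ (k - 1))) z := by
  have hpow : HasDerivAt (fun z : ℂ => z ^ n - 1) (n * z ^ ((n : ℤ) - 1)) z := by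
    simpa using (hasDerivAt_zpow n z (Or.inl hz)).sub_const 1
  have hexp : z ^ a * z ^ ((n : ℤ) - 1) = z ^ (a + n - 1) := by
    rw [← zpow_add₀ hz]; ring_nf
  refine ((hasDerivAt_zpow a z (Or.inl hz)).mul
    ((hasDerivAt_zpow k _ (Or.inl hw)).comp z hpow)).congr_deriv ?_
  rw [Function.comp_apply, ← hexp]; ring

lemma circleIntegral_zpow_mul_pow_sub_one_zpow_recursion {c : ℂ} {R : ℝ} (hR : 0 ≤ R)
    (hS : ∀ z ∈ sphere c R, z ≠ 0 ∧ z ^ n - 1 ≠ 0) (a k : ℤ) :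
    a * (∮ z in C(c, R), z ^ (a - 1) * (z ^ n - 1) ^ k) +
      k * n * (∮ z in C(c, R), z ^ (a + n - 1) * (z ^ n - 1) ^ (k - 1)) = 0 := by
  have hint (d : ℂ) (e j : ℤ) :
      CircleIntegrable (fun z : ℂ => d * (z ^ e * (z ^ n - 1) ^ j)) c R :=
    (continuousOn_const.mul ((continuousOn_id.zpow₀ e fun z hz => Or.inl (hS z hz).1).mul
      (((continuous_pow n).sub continuous_const).continuousOn.zpow₀ j
        fun z hz => Or.inl (hS z hz).2))).circleIntegrable hR
  rw [← circleIntegral.integral_const_mul, ← circleIntegral.integral_const_mul,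
    ← circleIntegral.integral_add (hint _ _ _) (hint _ _ _)]
  exact circleIntegral.integral_eq_zero_of_hasDerivWithinAt hR fun z hz =>
    (hasDerivAt_zpow_mul_pow_sub_one_zpow a k (hS z hz).1 (hS z hz).2).hasDerivWithinAt

lemma circleIntegral_zpow_mul_pow_sub_one_inv {R : ℝ} (hR : 0 < R)
    (hB : ∀ z ∈ closedBall (1 : ℂ) R, z ≠ 0 ∧ ∑ i ∈ range n, z ^ i ≠ 0) (b : ℤ) :
    ∮ z in C(1, R), z ^ b * (z ^ n - 1) ^ (-1 : ℤ) = 2 * Real.pi * I / n := by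
  have hg : DifferentiableOn ℂ (fun z : ℂ => z ^ b * (∑ i ∈ range n, z ^ i)⁻¹)
      (closedBall 1 R) := fun z hz =>
    ((differentiableAt_zpow.2 (Or.inl (hB z hz).1)).mul
      ((DifferentiableAt.fun_sum fun i _ => differentiableAt_pow i).inv (hB z hz).2))
      |>.differentiableWithinAt
  have hfactor (z : ℂ) : z ^ b * (z ^ n - 1) ^ (-1 : ℤ) =
      (z - 1)⁻¹ • (z ^ b * (∑ i ∈ range n, z ^ i)⁻¹) := by
    rw [← geom_sum_mul, zpow_neg_one, mul_inv, smul_eq_mul]; ring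
  simp only [hfactor, hg.circleIntegral_sub_inv_smul (mem_ball_self hR)]
  simp [div_eq_mul_inv]

lemma pow_sub_one_ne_zero_of_mem_sphere {R : ℝ} (hR : 0 < R)
    (hB : ∀ z ∈ closedBall (1 : ℂ) R, z ≠ 0 ∧ ∑ i ∈ range n, z ^ i ≠ 0) :
    ∀ z ∈ sphere (1 : ℂ) R, z ≠ 0 ∧ z ^ n - 1 ≠ 0 := by
  intro z hz
  have hz1 : z - 1 ≠ 0 := sub_ne_zero.2 (ne_of_mem_sphere hz hR.ne')
  obtain ⟨hz0, hp⟩ := hB z (sphere_subset_closedBall hz)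
  exact ⟨hz0, by rw [← geom_sum_mul]; exact mul_ne_zero hp hz1⟩

lemma circleIntegral_zpow_mul_pow_sub_one_zpow_ne_zero (hn : 2 ≤ n) {R : ℝ} (hR : 0 < R)
    (hB : ∀ z ∈ closedBall (1 : ℂ) R, z ≠ 0 ∧ ∑ i ∈ range n, z ^ i ≠ 0) (l : ℕ) {b : ℤ}
    (hb : b ≤ 0) :
    ∮ z in C(1, R), z ^ b * (z ^ n - 1) ^ (-(l + 1 : ℤ)) ≠ 0 := by
  induction l generalizing b with
  | zero =>
    rw [Nat.cast_zero, zero_add, circleIntegral_zpow_mul_pow_sub_one_inv hR hB]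
    have : (n : ℂ) ≠ 0 := by exact_mod_cast (by omega : n ≠ 0)
    simp [Real.pi_ne_zero, I_ne_zero, this]
  | succ l ih =>
    intro h
    have hrec := circleIntegral_zpow_mul_pow_sub_one_zpow_recursion hR.le
      (pow_sub_one_ne_zero_of_mem_sphere hR hB) (b - n + 1) (-(l + 1))
    rw [show b - n + 1 + n - 1 = b by ring, show -((l : ℤ) + 1) - 1 = -((l + 1 : ℕ) + 1 : ℤ) by
      push_cast; ring, h, mul_zero, add_zero, show b - n + 1 - 1 = b - n by ring] at hrec
    exact mul_ne_zero (by exact_mod_cast (by omega : b - n + 1 ≠ 0)) (ih (by omega)) hrec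

lemma exists_pos_forall_mem_ball_ne_zero_and_geom_sum_ne_zero (hn : n ≠ 0) :
    ∃ ε > 0, ∀ z ∈ ball (1 : ℂ) ε, z ≠ 0 ∧ ∑ i ∈ range n, z ^ i ≠ 0 := by
  have hp : ∀ᶠ z in 𝓝 (1 : ℂ), ∑ i ∈ range n, z ^ i ≠ 0 :=
    (continuous_finsetSum _ fun i _ => continuous_pow i).continuousAt.eventually_ne
      (by simpa using hn)
  exact Metric.eventually_nhds_iff_ball.1 ((eventually_ne_nhds one_ne_zero).and hp)

theorem exists_pos_circleIntegral_inv_pow_sub_one_pow_ne_zero (hn : 2 ≤ n) {k : ℕ}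
    (hk : k ≠ 0) :
    ∃ ε > (0 : ℝ), ∀ δ : ℝ, 0 < δ → δ < ε → ∮ z in C(1, δ), ((z ^ n - 1) ^ k)⁻¹ ≠ 0 := by
  obtain ⟨ε, hε, hball⟩ := exists_pos_forall_mem_ball_ne_zero_and_geom_sum_ne_zero (n := n)
    (by omega)
  refine ⟨ε, hε, fun δ hδ hδε => ?_⟩
  obtain ⟨l, rfl⟩ := Nat.exists_eq_succ_of_ne_zero hk
  convert circleIntegral_zpow_mul_pow_sub_one_zpow_ne_zero hn hδ
    (fun z hz => hball z (closedBall_subset_ball hδε hz)) l le_rfl using 3 with z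
  rw [zpow_zero, one_mul, ← Nat.cast_succ, zpow_neg, zpow_natCast]

end PowSubOne

theorem stmt_13_general (n m : ℕ) (hn : 3 ≤ n) :
    (∃ ε > (0 : ℝ), ∀ δ : ℝ, 0 < δ → δ < ε →
      circleIntegral (fun z : ℂ => ((z ^ n - 1) ^ (2 * (m + 1)))⁻¹) 1 δ ≠ 0) ∧
    (∃ ε > (0 : ℝ), ∀ δ : ℝ, 0 < δ → δ < ε →
      circleIntegral
        (fun z : ℂ => (((n * (m + 1) : ℕ) : ℂ) - 1)⁻¹ *
          ((z ^ n - 1) ^ (2 * (m + 1)))⁻¹) 1 δ ≠ 0) := by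
  obtain ⟨ε, hε, hres⟩ := exists_pos_circleIntegral_inv_pow_sub_one_pow_ne_zero (n := n)
    (k := 2 * (m + 1)) (by omega) (by omega)
  have hdeg : ((n * (m + 1) : ℕ) : ℂ) - 1 ≠ 0 :=
    sub_ne_zero.2 (by exact_mod_cast (by nlinarith : n * (m + 1) ≠ 1))
  refine ⟨⟨ε, hε, hres⟩, ⟨ε, hε, fun δ hδ hδε => ?_⟩⟩
  rw [circleIntegral.integral_const_mul]
  exact mul_ne_zero (inv_ne_zero hdeg) (hres δ hδ hδε)

theorem stmt_13 (n m : ℕ) (hn : 3 ≤ n) (hm : 1 ≤ m) :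
    (∃ ε > (0 : ℝ), ∀ δ : ℝ, 0 < δ → δ < ε →
      circleIntegral (fun z : ℂ => ((z ^ n - 1) ^ (2 * (m + 1)))⁻¹) 1 δ ≠ 0) ∧
    (∃ ε > (0 : ℝ), ∀ δ : ℝ, 0 < δ → δ < ε →
      circleIntegral
        (fun z : ℂ => (((n * (m + 1) : ℕ) : ℂ) - 1)⁻¹ *
          ((z ^ n - 1) ^ (2 * (m + 1)))⁻¹) 1 δ ≠ 0) :=
  stmt_13_general n m hn
end

section
/- Let β be a nonzero constant and consider the rational 1-form ω = β·(z³+8)⁴/(z⁶(z³−a³)²) dz on ℂ, with a³ ≠ 0, −8. Then all residues of ω (at z = 0 and at the three cube roots of a³) vanish if and only if a³ = 16. -/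
set_option maxHeartbeats 1000000


open Complex Real

noncomputable def QQ (p z : ℂ) : ℂ :=
  9*p^11*z^10 + (14*p^12-32*p^9+768*p^6+10240*p^3+32768)*z^9
  + (14*p^13-128*p^10+1920*p^7+28672*p^4+94208*p)*z^8
  + (8*p^14-32*p^11+3072*p^8+53248*p^5+180224*p^2)*z^7
  + (3*p^15+2304*p^9+61440*p^6+221184*p^3)*z^6
  + (55296*p^7+221184*p^4)*z^5 + (36864*p^8+184320*p^5)*z^4
  + (18432*p^9+147456*p^6)*z^3 + 110592*p^7*z^2 + 73728*p^8*z + 36864*p^9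

lemma my_circleIntegral_add {f g : ℂ → ℂ} {c : ℂ} {R : ℝ} (hf : CircleIntegrable f c R)
    (hg : CircleIntegrable g c R) :
    (∮ z in C(c, R), (f z + g z)) = (∮ z in C(c, R), f z) + ∮ z in C(c, R), g z := by
  simp only [circleIntegral, smul_add, intervalIntegral.integral_add hf.out hg.out]

/-- Key computation at a simple cube-root pole `p`. -/
lemma resid_p (β p : ℂ) (hp0 : p ≠ 0) {δ : ℝ} (h0 : 0 < δ) (hδ : δ < ‖p‖ / 2) :
    circleIntegral (fun z : ℂ => β * (z ^ 3 + 8) ^ 4 / (z ^ 6 * (z ^ 3 - p ^ 3) ^ 2)) p δ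
      = 2 * π * I * (4 * β * (p ^ 3 + 8) ^ 3 * (p ^ 3 - 16) / (9 * p ^ 11)) := by
  have hpn : (0:ℝ) < ‖p‖ := by simpa [norm_pos_iff] using hp0
  -- facts on the closed ball
  have hball : ∀ z ∈ Metric.closedBall p δ, z ≠ 0 ∧ z ^ 2 + p * z + p ^ 2 ≠ 0 := by
    intro z hz
    have hd : ‖z - p‖ ≤ δ := by
      simpa [dist_eq_norm] using (Metric.mem_closedBall.1 hz)
    constructor
    · intro h
      rw [h] at hd
      simp only [zero_sub, norm_neg] at hd
      linarith
    · intro h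
      have hw : z ^ 2 + p * z + p ^ 2 = 3 * p ^ 2 + 3 * p * (z - p) + (z - p) ^ 2 := by ring
      rw [hw] at h
      have h3 : (3:ℂ) * p ^ 2 = -(3 * p * (z - p) + (z - p) ^ 2) := by linear_combination h
      have hnorm : 3 * ‖p‖ ^ 2 ≤ 3 * ‖p‖ * ‖z - p‖ + ‖z - p‖ ^ 2 := by
        calc 3 * ‖p‖ ^ 2 = ‖(3:ℂ) * p ^ 2‖ := by
              rw [norm_mul, norm_pow]; norm_num
          _ = ‖3 * p * (z - p) + (z - p) ^ 2‖ := by rw [h3, norm_neg]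
          _ ≤ ‖3 * p * (z - p)‖ + ‖(z - p) ^ 2‖ := norm_add_le _ _
          _ = 3 * ‖p‖ * ‖z - p‖ + ‖z - p‖ ^ 2 := by
              rw [norm_mul, norm_mul, norm_pow]; norm_num
      have h1 : ‖z - p‖ < ‖p‖ / 2 := lt_of_le_of_lt hd hδ
      nlinarith [norm_nonneg (z - p)]
  have hsphere : Metric.sphere p δ ⊆ Metric.closedBall p δ := Metric.sphere_subset_closedBall
  have hzp : ∀ z ∈ Metric.sphere p δ, z ≠ p := by
    intro z hz h
    rw [Metric.mem_sphere, h, dist_self] at hz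
    linarith
  set s : ℂ := β * (p ^ 3 + 8) ^ 4 / (9 * p ^ 10) with hs
  set r : ℂ := 4 * β * (p ^ 3 + 8) ^ 3 * (p ^ 3 - 16) / (9 * p ^ 11) with hr
  set g : ℂ → ℂ := fun z => β * QQ p z / (9 * p ^ 11 * (z ^ 6 * (z ^ 2 + p * z + p ^ 2) ^ 2))
    with hg
  -- pointwise decomposition on the sphere
  have hEq : Set.EqOn (fun z : ℂ => β * (z ^ 3 + 8) ^ 4 / (z ^ 6 * (z ^ 3 - p ^ 3) ^ 2))
      (fun z => (s * ((z - p) ^ 2)⁻¹ + r * (z - p)⁻¹) + g z) (Metric.sphere p δ) := by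
    intro z hz
    obtain ⟨hz0, hq⟩ := hball z (hsphere hz)
    have hzp' : z - p ≠ 0 := sub_ne_zero.2 (hzp z hz)
    have hfac : z ^ 3 - p ^ 3 = (z - p) * (z ^ 2 + p * z + p ^ 2) := by ring
    have hq2 : (z - p) ^ 2 ≠ 0 := pow_ne_zero _ hzp'
    have hC : 9 * p ^ 11 * (z ^ 6 * (z ^ 2 + p * z + p ^ 2) ^ 2) ≠ 0 :=
      mul_ne_zero (by simp [hp0]) (mul_ne_zero (pow_ne_zero _ hz0) (pow_ne_zero _ hq))
    have hL : z ^ 6 * ((z - p) * (z ^ 2 + p * z + p ^ 2)) ^ 2 ≠ 0 :=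
      mul_ne_zero (pow_ne_zero _ hz0) (pow_ne_zero _ (mul_ne_zero hzp' hq))
    have e1 : s * ((z - p) ^ 2)⁻¹ = β * (p ^ 3 + 8) ^ 4 / (9 * p ^ 10 * (z - p) ^ 2) := by
      rw [hs, ← div_eq_mul_inv, div_div]
    have e2 : r * (z - p)⁻¹
        = 4 * β * (p ^ 3 + 8) ^ 3 * (p ^ 3 - 16) / (9 * p ^ 11 * (z - p)) := by
      rw [hr, ← div_eq_mul_inv, div_div]
    have hD1 : 9 * p ^ 10 * (z - p) ^ 2 ≠ 0 := mul_ne_zero (by simp [hp0]) hq2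
    have hD2 : 9 * p ^ 11 * (z - p) ≠ 0 := mul_ne_zero (by simp [hp0]) hzp'
    simp only [hg, QQ]
    rw [hfac, e1, e2, div_add_div _ _ hD1 hD2, div_add_div _ _ (mul_ne_zero hD1 hD2) hC,
      div_eq_div_iff hL (mul_ne_zero (mul_ne_zero hD1 hD2) hC)]
    ring
  -- differentiability of the analytic part on the closed ball
  have hgd : ∀ z ∈ Metric.closedBall p δ, DifferentiableAt ℂ g z := by
    intro z hz
    obtain ⟨hz0, hq⟩ := hball z hz
    have hden : 9 * p ^ 11 * (z ^ 6 * (z ^ 2 + p * z + p ^ 2) ^ 2) ≠ 0 := by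
      apply mul_ne_zero (by simp [hp0])
      exact mul_ne_zero (pow_ne_zero _ hz0) (pow_ne_zero _ hq)
    apply DifferentiableAt.div
    · simp only [QQ]; fun_prop
    · fun_prop
    · exact hden
  have hgc : ContinuousOn g (Metric.closedBall p δ) :=
    fun z hz => (hgd z hz).continuousAt.continuousWithinAt
  -- integrability of pieces
  have hc1 : ContinuousOn (fun z : ℂ => s * ((z - p) ^ 2)⁻¹) (Metric.sphere p δ) :=
    continuousOn_const.mul (((continuousOn_id.sub continuousOn_const).pow 2).inv₀
      fun z hz => pow_ne_zero _ (sub_ne_zero.2 (hzp z hz)))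
  have hc2 : ContinuousOn (fun z : ℂ => r * (z - p)⁻¹) (Metric.sphere p δ) :=
    continuousOn_const.mul ((continuousOn_id.sub continuousOn_const).inv₀
      fun z hz => sub_ne_zero.2 (hzp z hz))
  have hi1 := hc1.circleIntegrable h0.le
  have hi2 := hc2.circleIntegrable h0.le
  have hi3 := (hgc.mono hsphere).circleIntegrable h0.le
  have hi12 : CircleIntegrable (fun z : ℂ => s * ((z - p) ^ 2)⁻¹ + r * (z - p)⁻¹) p δ :=
    hi1.add hi2
  rw [circleIntegral.integral_congr h0.le hEq,
    my_circleIntegral_add hi12 hi3,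
    my_circleIntegral_add hi1 hi2]
  -- the three integrals
  have I1 : (∮ z in C(p, δ), s * ((z - p) ^ 2)⁻¹) = 0 := by
    have : (∮ z in C(p, δ), s * ((z - p) ^ 2)⁻¹) = s • ∮ z in C(p, δ), ((z - p) ^ 2)⁻¹ := by
      rw [← circleIntegral.integral_smul]
      exact circleIntegral.integral_congr h0.le fun z hz => by simp [smul_eq_mul]
    rw [this]
    have h2 : (∮ z in C(p, δ), ((z - p) ^ 2)⁻¹) = ∮ z in C(p, δ), (z - p) ^ (-2 : ℤ) :=
      circleIntegral.integral_congr h0.le fun z hz => by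
        rw [zpow_neg]; norm_cast
    rw [h2, circleIntegral.integral_sub_zpow_of_ne (by decide) p p δ, smul_zero]
  have I2 : (∮ z in C(p, δ), r * (z - p)⁻¹) = r * (2 * π * I) := by
    have : (∮ z in C(p, δ), r * (z - p)⁻¹) = r • ∮ z in C(p, δ), (z - p)⁻¹ := by
      rw [← circleIntegral.integral_smul]
      exact circleIntegral.integral_congr h0.le fun z hz => by simp [smul_eq_mul]
    rw [this, circleIntegral.integral_sub_inv_of_mem_ball (Metric.mem_ball_self h0),
      smul_eq_mul]
  have I3 : (∮ z in C(p, δ), g z) = 0 :=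
    circleIntegral_eq_zero_of_differentiable_on_off_countable h0.le Set.countable_empty hgc
      fun z hz => hgd z (Metric.ball_subset_closedBall hz.1)
  rw [I1, I2, I3]
  ring

/-- Key computation at the pole `0`: the residue there always vanishes. -/
lemma resid_0 (β a : ℂ) (ha : a ≠ 0) {δ : ℝ} (h0 : 0 < δ) (hδ : δ < ‖a‖ / 2) :
    circleIntegral (fun z : ℂ => β * (z ^ 3 + 8) ^ 4 / (z ^ 6 * (z ^ 3 - a ^ 3) ^ 2)) 0 δ
      = 0 := by
  have han : (0:ℝ) < ‖a‖ := by simpa [norm_pos_iff] using ha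
  have hball : ∀ z ∈ Metric.closedBall (0:ℂ) δ, z ^ 3 - a ^ 3 ≠ 0 := by
    intro z hz h
    have hd : ‖z‖ ≤ δ := by simpa [dist_eq_norm] using (Metric.mem_closedBall.1 hz)
    have hlt : ‖z‖ < ‖a‖ := by linarith
    have h3 : ‖z‖ ^ 3 < ‖a‖ ^ 3 := by
      exact pow_lt_pow_left₀ hlt (norm_nonneg z) (by norm_num)
    have he : z ^ 3 = a ^ 3 := by linear_combination h
    have : ‖z‖ ^ 3 = ‖a‖ ^ 3 := by rw [← norm_pow, ← norm_pow, he]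
    linarith
  have hsphere : Metric.sphere (0:ℂ) δ ⊆ Metric.closedBall (0:ℂ) δ :=
    Metric.sphere_subset_closedBall
  have hz0 : ∀ z ∈ Metric.sphere (0:ℂ) δ, z ≠ 0 := by
    intro z hz h
    rw [Metric.mem_sphere, h, dist_self] at hz
    linarith
  set c6 : ℂ := 4096 * β / a ^ 6 with hc6
  set c3 : ℂ := β * (2048 * a ^ 3 + 8192) / a ^ 9 with hc3
  set g : ℂ → ℂ := fun z => β * (a ^ 9 * z ^ 6 + (32 * a ^ 9 - 2048 * a ^ 3 - 8192) * z ^ 3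
      + (384 * a ^ 9 + 4096 * a ^ 6 + 12288 * a ^ 3)) / (a ^ 9 * (z ^ 3 - a ^ 3) ^ 2) with hg
  have hEq : Set.EqOn (fun z : ℂ => β * (z ^ 3 + 8) ^ 4 / (z ^ 6 * (z ^ 3 - a ^ 3) ^ 2))
      (fun z => (c6 * (z ^ 6)⁻¹ + c3 * (z ^ 3)⁻¹) + g z) (Metric.sphere (0:ℂ) δ) := by
    intro z hz
    have h1 := hball z (hsphere hz)
    have h2 := hz0 z hz
    have hz6 : z ^ 6 ≠ 0 := pow_ne_zero _ h2
    have hz3 : z ^ 3 ≠ 0 := pow_ne_zero _ h2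
    have hC : a ^ 9 * (z ^ 3 - a ^ 3) ^ 2 ≠ 0 :=
      mul_ne_zero (pow_ne_zero _ ha) (pow_ne_zero _ h1)
    have hL : z ^ 6 * (z ^ 3 - a ^ 3) ^ 2 ≠ 0 := mul_ne_zero hz6 (pow_ne_zero _ h1)
    have e1 : c6 * (z ^ 6)⁻¹ = 4096 * β / (a ^ 6 * z ^ 6) := by
      rw [hc6, ← div_eq_mul_inv, div_div]
    have e2 : c3 * (z ^ 3)⁻¹ = β * (2048 * a ^ 3 + 8192) / (a ^ 9 * z ^ 3) := by
      rw [hc3, ← div_eq_mul_inv, div_div]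
    have hD1 : a ^ 6 * z ^ 6 ≠ 0 := mul_ne_zero (pow_ne_zero _ ha) hz6
    have hD2 : a ^ 9 * z ^ 3 ≠ 0 := mul_ne_zero (pow_ne_zero _ ha) hz3
    simp only [hg, hc6, hc3]
    rw [e1, e2, div_add_div _ _ hD1 hD2, div_add_div _ _ (mul_ne_zero hD1 hD2) hC,
      div_eq_div_iff hL (mul_ne_zero (mul_ne_zero hD1 hD2) hC)]
    ring
  have hgd : ∀ z ∈ Metric.closedBall (0:ℂ) δ, DifferentiableAt ℂ g z := by
    intro z hz
    have hden : a ^ 9 * (z ^ 3 - a ^ 3) ^ 2 ≠ 0 :=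
      mul_ne_zero (pow_ne_zero _ ha) (pow_ne_zero _ (hball z hz))
    apply DifferentiableAt.div
    · fun_prop
    · fun_prop
    · exact hden
  have hgc : ContinuousOn g (Metric.closedBall (0:ℂ) δ) :=
    fun z hz => (hgd z hz).continuousAt.continuousWithinAt
  have hc1 : ContinuousOn (fun z : ℂ => c6 * (z ^ 6)⁻¹) (Metric.sphere (0:ℂ) δ) :=
    continuousOn_const.mul ((continuousOn_id.pow 6).inv₀
      fun z hz => pow_ne_zero _ (hz0 z hz))
  have hc2 : ContinuousOn (fun z : ℂ => c3 * (z ^ 3)⁻¹) (Metric.sphere (0:ℂ) δ) :=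
    continuousOn_const.mul ((continuousOn_id.pow 3).inv₀
      fun z hz => pow_ne_zero _ (hz0 z hz))
  have hi1 := hc1.circleIntegrable h0.le
  have hi2 := hc2.circleIntegrable h0.le
  have hi3 := (hgc.mono hsphere).circleIntegrable h0.le
  have hi12 : CircleIntegrable (fun z : ℂ => c6 * (z ^ 6)⁻¹ + c3 * (z ^ 3)⁻¹) 0 δ :=
    hi1.add hi2
  rw [circleIntegral.integral_congr h0.le hEq,
    my_circleIntegral_add hi12 hi3,
    my_circleIntegral_add hi1 hi2]
  have I1 : (∮ z in C((0:ℂ), δ), c6 * (z ^ 6)⁻¹) = 0 := by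
    have : (∮ z in C((0:ℂ), δ), c6 * (z ^ 6)⁻¹) = c6 • ∮ z in C((0:ℂ), δ), (z - 0) ^ (-6 : ℤ) := by
      rw [← circleIntegral.integral_smul]
      exact circleIntegral.integral_congr h0.le fun z hz => by
        rw [zpow_neg, sub_zero, smul_eq_mul]; norm_cast
    rw [this, circleIntegral.integral_sub_zpow_of_ne (by decide) 0 0 δ, smul_zero]
  have I2 : (∮ z in C((0:ℂ), δ), c3 * (z ^ 3)⁻¹) = 0 := by
    have : (∮ z in C((0:ℂ), δ), c3 * (z ^ 3)⁻¹) = c3 • ∮ z in C((0:ℂ), δ), (z - 0) ^ (-3 : ℤ) := by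
      rw [← circleIntegral.integral_smul]
      exact circleIntegral.integral_congr h0.le fun z hz => by
        rw [zpow_neg, sub_zero, smul_eq_mul]; norm_cast
    rw [this, circleIntegral.integral_sub_zpow_of_ne (by decide) 0 0 δ, smul_zero]
  have I3 : (∮ z in C((0:ℂ), δ), g z) = 0 :=
    circleIntegral_eq_zero_of_differentiable_on_off_countable h0.le Set.countable_empty hgc
      fun z hz => hgd z (Metric.ball_subset_closedBall hz.1)
  rw [I1, I2, I3]
  ring

theorem stmt_18 (β a : ℂ) (hβ : β ≠ 0) (ha : a ≠ 0) (ha8 : a ^ 3 ≠ -8) :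
    (∀ p : ℂ, (p = 0 ∨ p ^ 3 = a ^ 3) →
      ∃ ε > (0 : ℝ), ∀ δ : ℝ, 0 < δ → δ < ε →
        circleIntegral
          (fun z : ℂ => β * (z ^ 3 + 8) ^ 4 / (z ^ 6 * (z ^ 3 - a ^ 3) ^ 2)) p δ = 0)
      ↔ a ^ 3 = 16 := by
  have ha8' : a ^ 3 + 8 ≠ 0 := fun h => ha8 (by linear_combination h)
  have han : (0:ℝ) < ‖a‖ := by simpa [norm_pos_iff] using ha
  constructor
  · intro h
    obtain ⟨ε, hε, H⟩ := h a (Or.inr rfl)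
    set δ : ℝ := min (ε / 2) (‖a‖ / 4) with hδdef
    have hδ0 : 0 < δ := lt_min (by linarith) (by linarith)
    have hδε : δ < ε := lt_of_le_of_lt (min_le_left _ _) (by linarith)
    have hδa : δ < ‖a‖ / 2 := lt_of_le_of_lt (min_le_right _ _) (by linarith)
    have h1 := H δ hδ0 hδε
    rw [resid_p β a ha hδ0 hδa] at h1
    have h2πI : (2 * ↑π * I : ℂ) ≠ 0 := by
      simp [Real.pi_ne_zero, I_ne_zero]
    have h2 : 4 * β * (a ^ 3 + 8) ^ 3 * (a ^ 3 - 16) / (9 * a ^ 11) = 0 :=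
      (mul_eq_zero.1 h1).resolve_left h2πI
    rw [div_eq_zero_iff] at h2
    rcases h2 with h2 | h2
    · have h3 : a ^ 3 - 16 = 0 := by
        rcases mul_eq_zero.1 h2 with h4 | h4
        · exfalso
          rcases mul_eq_zero.1 h4 with h5 | h5
          · rcases mul_eq_zero.1 h5 with h6 | h6
            · norm_num at h6
            · exact hβ h6
          · exact pow_ne_zero 3 ha8' h5
        · exact h4
      linear_combination h3
    · exfalso
      rcases mul_eq_zero.1 h2 with h4 | h4
      · norm_num at h4
      · exact pow_ne_zero 11 ha h4
  · intro h16 p hp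
    rcases hp with rfl | hp
    · refine ⟨‖a‖ / 2, by linarith, fun δ hδ0 hδ => ?_⟩
      exact resid_0 β a ha hδ0 hδ
    · have hp0 : p ≠ 0 := by
        intro h
        apply ha
        have : a ^ 3 = 0 := by rw [← hp, h]; ring
        exact pow_eq_zero_iff (by norm_num) |>.1 this
      have hpn : (0:ℝ) < ‖p‖ := by simpa [norm_pos_iff] using hp0
      refine ⟨‖p‖ / 2, by linarith, fun δ hδ0 hδ => ?_⟩
      have hres := resid_p β p hp0 hδ0 hδ
      rw [← hp]
      rw [hres]
      have hz : p ^ 3 - 16 = 0 := by rw [hp, h16]; ring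
      rw [hz]
      simp
end
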